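/- Let N be a finite index set, and for each n ∈ N let h_n > 0 and s_n > 0 be real numbers; let V > 0, c > 0, P_max > 0, and ζ ≥ 0 be real numbers. Define p*_n = max(0, c/((V + ζ)·ln 2) − s_n/h_n), and suppose Σ_{n∈N} p*_n ≤ P_max and ζ·(Σ_{n∈N} p*_n − P_max) = 0. Then for every vector (p_n)_{n∈N} with p_n ≥ 0 for all n and Σ_{n∈N} p_n ≤ P_max, one has Σ_{n∈N} (V·p*_n − c·log₂(1 + p*_n·h_n/s_n)) ≤ Σ_{n∈N} (V·p_n − c·log₂(1 + p_n·h_n/s_n)). -/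
import Mathlib

/-- Per-coordinate optimality of the water-filling level against the Lagrangian. -/
lemma key_wf (a c t : ℝ) (ha : 0 < a) (hc : 0 < c) (ht : 0 < t)
    (p q : ℝ) (hp : 0 ≤ p) (hq : q = max 0 (c / (a * Real.log 2) - 1 / t)) :
    a * q - c * Real.logb 2 (1 + q * t) ≤ a * p - c * Real.logb 2 (1 + p * t) := by
  have hL : 0 < Real.log 2 := Real.log_pos (by norm_num)
  have hq0 : 0 ≤ q := hq ▸ le_max_left _ _
  have h1q : 0 < 1 + q * t := by positivity
  have h1p : 0 < 1 + p * t := by positivity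
  -- log difference bound
  have hlog : Real.log (1 + p * t) - Real.log (1 + q * t) ≤ (p - q) * t / (1 + q * t) := by
    have := Real.log_le_sub_one_of_pos (x := (1 + p * t) / (1 + q * t)) (by positivity)
    rw [Real.log_div (by positivity) (by positivity)] at this
    have h2 : (1 + p * t) / (1 + q * t) - 1 = (p - q) * t / (1 + q * t) := by
      field_simp; ring
    linarith [this, h2 ▸ this]
  -- bracket nonnegativity: (p - q) * (a - c * t / ((1 + q*t) * log 2)) ≥ 0
  have hbr : 0 ≤ (p - q) * (a - c * t / ((1 + q * t) * Real.log 2)) := by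
    rcases le_or_gt (c / (a * Real.log 2) - 1 / t) 0 with hle | hgt
    · have hq' : q = 0 := by rw [hq, max_eq_left hle]
      subst hq'
      have : c * t ≤ a * Real.log 2 := by
        rw [sub_nonpos, div_le_div_iff₀ (by positivity) ht] at hle
        linarith [hle]
      have h2 : a - c * t / ((1 + 0 * t) * Real.log 2) ≥ 0 := by
        rw [zero_mul, add_zero, one_mul, ge_iff_le, sub_nonneg, div_le_iff₀ hL]
        linarith
      nlinarith
    · have hq' : q = c / (a * Real.log 2) - 1 / t := by rw [hq, max_eq_right hgt.le]
      have hqt : 1 + q * t = c * t / (a * Real.log 2) := by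
        rw [hq']; field_simp; ring
      have : a - c * t / ((1 + q * t) * Real.log 2) = 0 := by
        rw [hqt]; field_simp; ring
      rw [this, mul_zero]
  -- combine
  have hcl : 0 ≤ c / Real.log 2 := by positivity
  have hmul : c / Real.log 2 * (Real.log (1 + p * t) - Real.log (1 + q * t))
      ≤ c / Real.log 2 * ((p - q) * t / (1 + q * t)) := by
    exact mul_le_mul_of_nonneg_left hlog hcl
  have hexp : c / Real.log 2 * ((p - q) * t / (1 + q * t))
      = (p - q) * (c * t / ((1 + q * t) * Real.log 2)) := by
    field_simp
  rw [Real.logb, Real.logb]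
  have : c * (Real.log (1 + p * t) / Real.log 2) - c * (Real.log (1 + q * t) / Real.log 2)
      = c / Real.log 2 * (Real.log (1 + p * t) - Real.log (1 + q * t)) := by ring
  nlinarith [hmul, hexp ▸ hmul, hbr]

/-- KKT characterization of the optimal power allocation (problem P3): if the
water-filling powers `p*_n = max(0, c/((V+ζ) ln 2) − s_n/h_n)` are primal feasible
and satisfy complementary slackness `ζ·(Σ p*_n − P_max) = 0`, then they minimize
`Σ_n (V·p_n − c·log₂(1 + p_n·h_n/s_n))` over all feasible power vectors. -/
theorem stmt_15 {ι : Type*} (N : Finset ι) (h s : ι → ℝ)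
    (hh : ∀ n ∈ N, 0 < h n) (hs : ∀ n ∈ N, 0 < s n)
    (V c Pmax ζ : ℝ) (hV : 0 < V) (hc : 0 < c) (hPmax : 0 < Pmax) (hζ : 0 ≤ ζ)
    (pstar : ι → ℝ)
    (hpstar : ∀ n ∈ N, pstar n = max 0 (c / ((V + ζ) * Real.log 2) - s n / h n))
    (hfeas : ∑ n ∈ N, pstar n ≤ Pmax)
    (hslack : ζ * (∑ n ∈ N, pstar n - Pmax) = 0) :
    ∀ p : ι → ℝ, (∀ n ∈ N, 0 ≤ p n) → ∑ n ∈ N, p n ≤ Pmax →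
      ∑ n ∈ N, (V * pstar n - c * Real.logb 2 (1 + pstar n * h n / s n))
        ≤ ∑ n ∈ N, (V * p n - c * Real.logb 2 (1 + p n * h n / s n)) := by
  intro p hp hpsum
  have ha : 0 < V + ζ := by linarith
  -- Lagrangian per-term inequality
  have hterm : ∀ n ∈ N,
      (V + ζ) * pstar n - c * Real.logb 2 (1 + pstar n * h n / s n)
        ≤ (V + ζ) * p n - c * Real.logb 2 (1 + p n * h n / s n) := by
    intro n hn
    have ht : 0 < h n / s n := div_pos (hh n hn) (hs n hn)
    have h1 : pstar n * h n / s n = pstar n * (h n / s n) := by ring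
    have h2 : p n * h n / s n = p n * (h n / s n) := by ring
    rw [h1, h2]
    refine key_wf (V + ζ) c (h n / s n) ha hc ht (p n) (pstar n) (hp n hn) ?_
    rw [hpstar n hn, one_div_div]
  have hsum : ∑ n ∈ N, ((V + ζ) * pstar n - c * Real.logb 2 (1 + pstar n * h n / s n))
      ≤ ∑ n ∈ N, ((V + ζ) * p n - c * Real.logb 2 (1 + p n * h n / s n)) :=
    Finset.sum_le_sum hterm
  have e1 : ∑ n ∈ N, ((V + ζ) * pstar n - c * Real.logb 2 (1 + pstar n * h n / s n))
      = (∑ n ∈ N, (V * pstar n - c * Real.logb 2 (1 + pstar n * h n / s n)))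
        + ζ * ∑ n ∈ N, pstar n := by
    rw [Finset.mul_sum, ← Finset.sum_add_distrib]
    exact Finset.sum_congr rfl fun n _ => by ring
  have e2 : ∑ n ∈ N, ((V + ζ) * p n - c * Real.logb 2 (1 + p n * h n / s n))
      = (∑ n ∈ N, (V * p n - c * Real.logb 2 (1 + p n * h n / s n)))
        + ζ * ∑ n ∈ N, p n := by
    rw [Finset.mul_sum, ← Finset.sum_add_distrib]
    exact Finset.sum_congr rfl fun n _ => by ring
  rw [e1, e2] at hsum
  have hζp : ζ * ∑ n ∈ N, p n ≤ ζ * Pmax := mul_le_mul_of_nonneg_left hpsum hζ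
  have hζstar : ζ * ∑ n ∈ N, pstar n = ζ * Pmax := by nlinarith [hslack]
  linarith
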